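/- (Lemma 1, value-iteration form.) Define the value iterates V_0 ≡ 0 and V_{k+1} = T V_k for all k ≥ 0. Then for every k ≥ 0, the function V_k is non-decreasing in each device-age coordinate A_n (n ∈ 𝒩₁), non-decreasing in the destination age Δ, and non-increasing in each channel coordinate h_n (n ∈ 𝒩). -/
import Mathlib


open Finset

/-- Validity of a device-age vector: ages in `{1,…,Âₙ}` for type-I devices (those in `N1`),
and age `0` for type-II devices. -/
def validAge {N : Type*} (N1 : Finset N) (Ahat : N → ℕ) (A : N → ℕ) : Prop :=
  (∀ n ∈ N1, 1 ≤ A n ∧ A n ≤ Ahat n) ∧ ∀ n ∉ N1, A n = 0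

/-- Destination-age update `D(A,Δ,u)`: if `u` is a full schedule (`|u| = M`), the new age is
`min(maxₙ uₙ·Aₙ + 1, Δ̂)`; otherwise it is `min(Δ+1, Δ̂)`. Actions are encoded as the
finset of scheduled devices. -/
def destUpdate {N : Type*} (M Δhat : ℕ) (A : N → ℕ) (Δ : ℕ) (u : Finset N) : ℕ :=
  if u.card = M then min (u.sup A + 1) Δhat else min (Δ + 1) Δhat

/-- Next device-age vector given that the set `S ⊆ N1` of type-I devices receives
fresh status packets. -/
def nextAge {N : Type*} [DecidableEq N] (N1 : Finset N) (Ahat : N → ℕ)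
    (S : Finset N) (A : N → ℕ) : N → ℕ :=
  fun n => if n ∈ N1 then (if n ∈ S then 1 else min (A n + 1) (Ahat n)) else 0

/-- Probability that exactly the devices in `S` receive arrivals. -/
noncomputable def arrWeight {N : Type*} [DecidableEq N] (N1 : Finset N) (lam : N → ℝ)
    (S : Finset N) : ℝ :=
  (∏ n ∈ S, lam n) * ∏ n ∈ N1 \ S, (1 - lam n)

/-- Probability of the next channel state vector `h` under independent components. -/
noncomputable def chanWeight {N : Type*} [Fintype N] {H : N → Type*}
    (q : ∀ n, H n → ℝ) (h : ∀ n, H n) : ℝ := ∏ n, q n (h n)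

/-- One-step energy cost `c(u,h) = Σₙ βₙ uₙ (Cˢₙ + Cᵘₙ(hₙ))`. -/
noncomputable def energyCost {N : Type*} {H : N → Type*} (β Cs : N → ℝ)
    (Cu : ∀ n, H n → ℝ) (u : Finset N) (h : ∀ n, H n) : ℝ :=
  ∑ n ∈ u, β n * (Cs n + Cu n (h n))

/-- Q-function `J_V(A,Δ,h,u) = Δ + c(u,h) + E[V(A', D(A,Δ,u), h')]`. -/
noncomputable def Qfun {N : Type*} [Fintype N] [DecidableEq N] {H : N → Type*}
    [∀ n, Fintype (H n)] (N1 : Finset N) (M Δhat : ℕ) (Ahat : N → ℕ) (lam : N → ℝ)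
    (q : ∀ n, H n → ℝ) (β Cs : N → ℝ) (Cu : ∀ n, H n → ℝ)
    (V : (N → ℕ) → ℕ → (∀ n, H n) → ℝ)
    (A : N → ℕ) (Δ : ℕ) (h : ∀ n, H n) (u : Finset N) : ℝ :=
  (Δ : ℝ) + energyCost β Cs Cu u h +
    ∑ S ∈ N1.powerset, arrWeight N1 lam S *
      ∑ h' : ∀ n, H n, chanWeight q h' *
        V (nextAge N1 Ahat S A) (destUpdate M Δhat A Δ u) h'

/-- Bellman operator: `(T V)(A,Δ,h) = min over feasible u of J_V(A,Δ,h,u)`. -/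
noncomputable def bellman {N : Type*} [Fintype N] [DecidableEq N] {H : N → Type*}
    [∀ n, Fintype (H n)] (N1 : Finset N) (M Δhat : ℕ) (Ahat : N → ℕ) (lam : N → ℝ)
    (q : ∀ n, H n → ℝ) (β Cs : N → ℝ) (Cu : ∀ n, H n → ℝ)
    (V : (N → ℕ) → ℕ → (∀ n, H n) → ℝ) :
    (N → ℕ) → ℕ → (∀ n, H n) → ℝ :=
  fun A Δ h =>
    (Finset.univ.filter (fun u : Finset N => u.card ≤ M)).inf'
      ⟨∅, by simp⟩ (Qfun N1 M Δhat Ahat lam q β Cs Cu V A Δ h)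

/-- `u` is optimal at state `(A,Δ,h)` under `V`. -/
def isOptimal {N : Type*} [Fintype N] [DecidableEq N] {H : N → Type*}
    [∀ n, Fintype (H n)] (N1 : Finset N) (M Δhat : ℕ) (Ahat : N → ℕ) (lam : N → ℝ)
    (q : ∀ n, H n → ℝ) (β Cs : N → ℝ) (Cu : ∀ n, H n → ℝ)
    (V : (N → ℕ) → ℕ → (∀ n, H n) → ℝ)
    (A : N → ℕ) (Δ : ℕ) (h : ∀ n, H n) (u : Finset N) : Prop :=
  ∀ v : Finset N, v.card ≤ M →
    Qfun N1 M Δhat Ahat lam q β Cs Cu V A Δ h u ≤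
    Qfun N1 M Δhat Ahat lam q β Cs Cu V A Δ h v

lemma destUpdate_one_le {N : Type*} (M Δhat : ℕ) (A : N → ℕ) (Δ : ℕ) (u : Finset N)
    (hΔhat : 1 ≤ Δhat) : 1 ≤ destUpdate M Δhat A Δ u := by
  unfold destUpdate; split <;> exact le_min (Nat.succ_le_succ (Nat.zero_le _)) hΔhat

lemma destUpdate_le_cap {N : Type*} (M Δhat : ℕ) (A : N → ℕ) (Δ : ℕ) (u : Finset N) :
    destUpdate M Δhat A Δ u ≤ Δhat := by
  unfold destUpdate; split <;> exact min_le_right _ _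

lemma destUpdate_mono_A {N : Type*} (M Δhat : ℕ) (A A' : N → ℕ) (Δ : ℕ) (u : Finset N)
    (hA : ∀ n, A n ≤ A' n) : destUpdate M Δhat A Δ u ≤ destUpdate M Δhat A' Δ u := by
  unfold destUpdate; split
  · exact min_le_min (Nat.add_le_add_right (Finset.sup_mono_fun (fun n _ => hA n)) 1) le_rfl
  · exact le_rfl

lemma destUpdate_mono_D {N : Type*} (M Δhat : ℕ) (A : N → ℕ) (Δ Δ' : ℕ) (u : Finset N)
    (hΔ : Δ ≤ Δ') : destUpdate M Δhat A Δ u ≤ destUpdate M Δhat A Δ' u := by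
  unfold destUpdate; split
  · exact le_rfl
  · exact min_le_min (Nat.add_le_add_right hΔ 1) le_rfl

lemma nextAge_valid {N : Type*} [DecidableEq N] (N1 : Finset N) (Ahat : N → ℕ)
    (S : Finset N) (A : N → ℕ) (hAhat : ∀ n ∈ N1, 1 ≤ Ahat n) :
    validAge N1 Ahat (nextAge N1 Ahat S A) := by
  constructor
  · intro n hn
    simp only [nextAge, if_pos hn]
    split
    · exact ⟨le_rfl, hAhat n hn⟩
    · exact ⟨le_min (Nat.succ_le_succ (Nat.zero_le _)) (hAhat n hn), min_le_right _ _⟩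
  · intro n hn; simp [nextAge, hn]

lemma nextAge_mono {N : Type*} [DecidableEq N] (N1 : Finset N) (Ahat : N → ℕ)
    (S : Finset N) (A A' : N → ℕ) (hA : ∀ n, A n ≤ A' n) :
    ∀ n, nextAge N1 Ahat S A n ≤ nextAge N1 Ahat S A' n := by
  intro n
  unfold nextAge
  split
  · split
    · exact le_rfl
    · exact min_le_min (Nat.add_le_add_right (hA n) 1) le_rfl
  · exact le_rfl

lemma arrWeight_nonneg {N : Type*} [DecidableEq N] (N1 : Finset N) (lam : N → ℝ)
    (S : Finset N) (hS : S ⊆ N1) (hlam : ∀ n ∈ N1, 0 ≤ lam n ∧ lam n ≤ 1) :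
    0 ≤ arrWeight N1 lam S := by
  apply mul_nonneg
  · exact Finset.prod_nonneg fun n hn => (hlam n (hS hn)).1
  · exact Finset.prod_nonneg fun n hn => by
      have := (hlam n (Finset.mem_sdiff.mp hn).1).2; linarith

lemma chanWeight_nonneg {N : Type*} [Fintype N] {H : N → Type*}
    [∀ n, Fintype (H n)] (q : ∀ n, H n → ℝ) (h : ∀ n, H n)
    (hq0 : ∀ n (x : H n), 0 ≤ q n x) : 0 ≤ chanWeight q h :=
  Finset.prod_nonneg fun n _ => hq0 n (h n)

/-- Lemma 1 (value-iteration form): with `V₀ ≡ 0` and `V_{k+1} = T V_k`, every iterate `V_k`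
is non-decreasing in each device-age coordinate `Aₙ` (`n ∈ N1`), non-decreasing in the
destination age `Δ`, and non-increasing in each channel coordinate `hₙ`. -/
theorem stmt7
    {N : Type*} [Fintype N] [DecidableEq N] {H : N → Type*}
    [∀ n, Fintype (H n)] [∀ n, LinearOrder (H n)]
    (N1 : Finset N) (M Δhat : ℕ) (Ahat : N → ℕ) (lam : N → ℝ)
    (q : ∀ n, H n → ℝ) (β Cs : N → ℝ) (Cu : ∀ n, H n → ℝ)
    (hM1 : 1 ≤ M) (hM2 : M ≤ Fintype.card N) (hΔhat : 1 ≤ Δhat)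
    (hAhat : ∀ n ∈ N1, 1 ≤ Ahat n)
    (hlam : ∀ n ∈ N1, 0 ≤ lam n ∧ lam n ≤ 1)
    (hq0 : ∀ n (x : H n), 0 ≤ q n x) (hq1 : ∀ n, ∑ x : H n, q n x = 1)
    (hCu0 : ∀ n (x : H n), 0 ≤ Cu n x) (hCuA : ∀ n, Antitone (Cu n))
    (hCs0 : ∀ n, 0 ≤ Cs n) (hCsI : ∀ n ∈ N1, Cs n = 0)
    (hβ : ∀ n, 0 < β n)
    : ∀ k : ℕ,
      (∀ (A A' : N → ℕ) (Δ : ℕ) (h : ∀ n, H n), validAge N1 Ahat A →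
        validAge N1 Ahat A' → (∀ n, A n ≤ A' n) → 1 ≤ Δ → Δ ≤ Δhat →
        (bellman N1 M Δhat Ahat lam q β Cs Cu)^[k] (fun _ _ _ => (0 : ℝ)) A Δ h ≤
        (bellman N1 M Δhat Ahat lam q β Cs Cu)^[k] (fun _ _ _ => (0 : ℝ)) A' Δ h) ∧
      (∀ (A : N → ℕ) (h : ∀ n, H n) (Δ Δ' : ℕ), validAge N1 Ahat A →
        1 ≤ Δ → Δ ≤ Δ' → Δ' ≤ Δhat →
        (bellman N1 M Δhat Ahat lam q β Cs Cu)^[k] (fun _ _ _ => (0 : ℝ)) A Δ h ≤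
        (bellman N1 M Δhat Ahat lam q β Cs Cu)^[k] (fun _ _ _ => (0 : ℝ)) A Δ' h) ∧
      (∀ (A : N → ℕ) (Δ : ℕ) (n : N) (h h' : ∀ m, H m), validAge N1 Ahat A →
        1 ≤ Δ → Δ ≤ Δhat → (∀ m, m ≠ n → h m = h' m) → h n ≤ h' n →
        (bellman N1 M Δhat Ahat lam q β Cs Cu)^[k] (fun _ _ _ => (0 : ℝ)) A Δ h' ≤
        (bellman N1 M Δhat Ahat lam q β Cs Cu)^[k] (fun _ _ _ => (0 : ℝ)) A Δ h) := by
  intro k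
  induction k with
  | zero => refine ⟨?_, ?_, ?_⟩ <;> intros <;> simp
  | succ k ih =>
    obtain ⟨IH1, IH2, IH3⟩ := ih
    set W := (bellman N1 M Δhat Ahat lam q β Cs Cu)^[k] (fun _ _ _ => (0 : ℝ)) with hW
    have hiter : (bellman N1 M Δhat Ahat lam q β Cs Cu)^[k+1] (fun _ _ _ => (0 : ℝ)) =
        bellman N1 M Δhat Ahat lam q β Cs Cu W := by
      rw [Function.iterate_succ_apply']
    rw [hiter]
    refine ⟨?_, ?_, ?_⟩
    · -- monotone in A
      intro A A' Δ h hvA hvA' hAA hΔ1 hΔ2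
      unfold bellman
      apply Finset.le_inf'
      intro u hu
      refine le_trans (Finset.inf'_le _ hu) ?_
      unfold Qfun
      gcongr with S hS h' _
      · exact arrWeight_nonneg N1 lam S (Finset.mem_powerset.mp hS) hlam
      · exact chanWeight_nonneg q h' hq0
      · refine le_trans
          (IH1 (nextAge N1 Ahat S A) (nextAge N1 Ahat S A') (destUpdate M Δhat A Δ u) h'
            (nextAge_valid N1 Ahat S A hAhat) (nextAge_valid N1 Ahat S A' hAhat)
            (nextAge_mono N1 Ahat S A A' hAA)
            (destUpdate_one_le M Δhat A Δ u hΔhat) (destUpdate_le_cap M Δhat A Δ u)) ?_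
        exact IH2 (nextAge N1 Ahat S A') h' (destUpdate M Δhat A Δ u)
          (destUpdate M Δhat A' Δ u) (nextAge_valid N1 Ahat S A' hAhat)
          (destUpdate_one_le M Δhat A Δ u hΔhat)
          (destUpdate_mono_A M Δhat A A' Δ u hAA) (destUpdate_le_cap M Δhat A' Δ u)
    · -- monotone in Δ
      intro A h Δ Δ' hvA hΔ1 hΔΔ hΔ2
      unfold bellman
      apply Finset.le_inf'
      intro u hu
      refine le_trans (Finset.inf'_le _ hu) ?_
      unfold Qfun
      gcongr with S hS h' _
      · exact arrWeight_nonneg N1 lam S (Finset.mem_powerset.mp hS) hlam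
      · exact chanWeight_nonneg q h' hq0
      · exact IH2 (nextAge N1 Ahat S A) h' (destUpdate M Δhat A Δ u)
          (destUpdate M Δhat A Δ' u) (nextAge_valid N1 Ahat S A hAhat)
          (destUpdate_one_le M Δhat A Δ u hΔhat)
          (destUpdate_mono_D M Δhat A Δ Δ' u hΔΔ) (destUpdate_le_cap M Δhat A Δ' u)
    · -- antitone in channel coordinate
      intro A Δ n h h' hvA hΔ1 hΔ2 heq hle
      unfold bellman
      apply Finset.le_inf'
      intro u hu
      refine le_trans (Finset.inf'_le _ hu) ?_
      unfold Qfun energyCost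
      gcongr with m hm
      · exact (hβ m).le
      · by_cases hmn : m = n
        · subst hmn; exact hCuA m hle
        · rw [heq m hmn]
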